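/- arXiv:0904.0924 — 8 statements merged into one kernel-verified Lean document; each statement's English description precedes it below -/
import Mathlib

section
/- Let L be a finite-dimensional Lie A-algebra over a field F. If B and C are abelian ideals of L, then [B, C] = 0. -/
/-- A finite-dimensional Lie algebra is an `A`-algebra if every nilpotent
subalgebra is abelian. -/
def IsAAlgebra (F L : Type*) [Field F] [LieRing L] [LieAlgebra F L] : Prop :=
  ∀ U : LieSubalgebra F L, LieRing.IsNilpotent U → IsLieAbelian U

/-!
If `B` and `C` are abelian ideals, then `⁅B ⊔ C, B ⊔ C⁆ = ⁅B, C⁆ ≤ B ⊓ C`, and `B ⊓ C` is central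
in `B ⊔ C`. So `B ⊔ C` is nilpotent of class at most two, hence abelian in an `A`-algebra, which
forces `⁅B, C⁆ = ⁅B ⊔ C, B ⊔ C⁆ = ⊥`.
-/

open LieModule LieSubmodule

namespace LieIdeal

variable {R L : Type*} [CommRing R] [LieRing L] [LieAlgebra R L]

theorem isNilpotent_of_lie_lie_self_eq_bot (I : LieIdeal R L) (h : ⁅I, ⁅I, I⁆⁆ = ⊥) :
    LieRing.IsNilpotent I := by
  refine (isNilpotent_iff R I I).mpr ⟨2, ?_⟩
  have hlcs : lowerCentralSeries R I I 2 = comap I.incl ⁅I, ⁅I, I⁆⁆ := by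
    rw [lowerCentralSeries_succ, lowerCentralSeries_succ, lowerCentralSeries_zero,
      ← comap_incl_self, comap_bracket_incl_of_le I le_rfl le_rfl,
      comap_bracket_incl_of_le I le_rfl (lie_le_left I I)]
  rw [hlcs, h, ← ker_incl, LieHom.ker]

variable {B C : LieIdeal R L}

theorem lie_sup_self_eq_lie_of_isLieAbelian (hB : IsLieAbelian B) (hC : IsLieAbelian C) :
    ⁅B ⊔ C, B ⊔ C⁆ = ⁅B, C⁆ := by
  rw [lie_abelian_iff_lie_self_eq_bot] at hB hC
  simp only [lie_sup, sup_lie, hB, hC, lie_comm C B, bot_sup_eq, sup_bot_eq, sup_idem]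

theorem lie_sup_lie_sup_self_eq_bot_of_isLieAbelian (hB : IsLieAbelian B) (hC : IsLieAbelian C) :
    ⁅B ⊔ C, ⁅B ⊔ C, B ⊔ C⁆⁆ = ⊥ := by
  rw [lie_sup_self_eq_lie_of_isLieAbelian hB hC, sup_lie]
  rw [lie_abelian_iff_lie_self_eq_bot] at hB hC
  have hBC := lie_le_inf B C
  refine le_bot_iff.mp (sup_le ?_ ?_)
  · exact hB ▸ mono_lie_right B (hBC.trans inf_le_left)
  · exact hC ▸ mono_lie_right C (hBC.trans inf_le_right)

theorem isNilpotent_sup_of_isLieAbelian (hB : IsLieAbelian B) (hC : IsLieAbelian C) :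
    LieRing.IsNilpotent ↥(B ⊔ C) :=
  isNilpotent_of_lie_lie_self_eq_bot _ (lie_sup_lie_sup_self_eq_bot_of_isLieAbelian hB hC)

end LieIdeal

theorem abelian_ideals_commute_general (F L : Type*) [Field F] [LieRing L] [LieAlgebra F L]
    (hA : IsAAlgebra F L)
    (B C : LieIdeal F L) (hB : IsLieAbelian B) (hC : IsLieAbelian C) :
    ⁅B, C⁆ = (⊥ : LieIdeal F L) := by
  rw [← LieIdeal.lie_sup_self_eq_lie_of_isLieAbelian hB hC, ← lie_abelian_iff_lie_self_eq_bot]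
  exact hA (B ⊔ C).toLieSubalgebra (LieIdeal.isNilpotent_sup_of_isLieAbelian hB hC)

theorem abelian_ideals_commute (F L : Type*) [Field F] [LieRing L] [LieAlgebra F L]
    [FiniteDimensional F L] (hA : IsAAlgebra F L)
    (B C : LieIdeal F L) (hB : IsLieAbelian B) (hC : IsLieAbelian C) :
    ⁅B, C⁆ = (⊥ : LieIdeal F L) :=
  abelian_ideals_commute_general F L hA B C hB hC
end

section
/- Let L be a finite-dimensional solvable Lie A-algebra over a field F. Then L splits over each term of its derived series: for every i ≥ 0 there exists a Lie subalgebra B of L such that L^(i) ∩ B = 0 and L^(i) + B = L. -/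
namespace Submodule

variable {R L : Type*} [CommRing R] [LieRing L] [LieAlgebra R L]

instance : Bracket (Submodule R L) (Submodule R L) where
  bracket P Q := map₂ (LinearMap.mk₂ R (⁅·, ·⁆) add_lie smul_lie lie_add lie_smul) P Q

variable {P P₁ P₂ Q Q₁ Q₂ N : Submodule R L}

theorem lie_le_iff : ⁅P, Q⁆ ≤ N ↔ ∀ x ∈ P, ∀ y ∈ Q, ⁅x, y⁆ ∈ N := map₂_le

theorem lie_mem_lie {x y : L} (hx : x ∈ P) (hy : y ∈ Q) : ⁅x, y⁆ ∈ ⁅P, Q⁆ :=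
  apply_mem_map₂ _ hx hy

theorem lie_le_lie (hP : P₁ ≤ P₂) (hQ : Q₁ ≤ Q₂) : ⁅P₁, Q₁⁆ ≤ ⁅P₂, Q₂⁆ :=
  map₂_le_map₂ hP hQ

theorem lie_comm (P Q : Submodule R L) : ⁅P, Q⁆ = ⁅Q, P⁆ := by
  have key (P Q : Submodule R L) : ⁅P, Q⁆ ≤ ⁅Q, P⁆ := lie_le_iff.2 fun x hx y hy ↦ by
    rw [← lie_skew]
    exact neg_mem (lie_mem_lie hy hx)
  exact le_antisymm (key P Q) (key Q P)

theorem sup_lie (P₁ P₂ Q : Submodule R L) : ⁅P₁ ⊔ P₂, Q⁆ = ⁅P₁, Q⁆ ⊔ ⁅P₂, Q⁆ :=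
  map₂_sup_left _ _ _ _

theorem lie_sup (P Q₁ Q₂ : Submodule R L) : ⁅P, Q₁ ⊔ Q₂⁆ = ⁅P, Q₁⁆ ⊔ ⁅P, Q₂⁆ :=
  map₂_sup_right _ _ _ _

theorem lie_lie_le (N P Q : Submodule R L) : ⁅N, ⁅P, Q⁆⁆ ≤ ⁅⁅N, P⁆, Q⁆ ⊔ ⁅P, ⁅N, Q⁆⁆ := by
  refine lie_le_iff.2 fun n hn z hz ↦ ?_
  suffices ⁅P, Q⁆ ≤ (⁅⁅N, P⁆, Q⁆ ⊔ ⁅P, ⁅N, Q⁆⁆).comap (LieModule.toEnd R L L n) from this hz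
  refine lie_le_iff.2 fun x hx y hy ↦ ?_
  rw [mem_comap, LieModule.toEnd_apply_apply, leibniz_lie n x y]
  exact add_mem (mem_sup_left (lie_mem_lie (lie_mem_lie hn hx) hy))
    (mem_sup_right (lie_mem_lie hx (lie_mem_lie hn hy)))

end Submodule

namespace LieSubalgebra

variable {R L : Type*} [CommRing R] [LieRing L] [LieAlgebra R L]

open Submodule

instance [IsArtinian R L] : WellFoundedLT (LieSubalgebra R L) :=
  StrictMono.wellFoundedLT (f := ((↑) : LieSubalgebra R L → Submodule R L)) fun _ _ h ↦ h

theorem lie_toSubmodule_le (S : LieSubalgebra R L) :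
    ⁅(S : Submodule R L), (S : Submodule R L)⁆ ≤ S :=
  lie_le_iff.2 fun _ hx _ hy ↦ S.lie_mem hx hy

def derivedSeriesOf (S : LieSubalgebra R L) : ℕ → Submodule R L
  | 0 => S
  | i + 1 => ⁅derivedSeriesOf S i, derivedSeriesOf S i⁆

def SplitsOver (S : LieSubalgebra R L) (P : Submodule R L) : Prop :=
  ∃ B : LieSubalgebra R L, B ≤ S ∧ P ⊓ B = ⊥ ∧ P ⊔ B = S

variable {S T : LieSubalgebra R L} {Q : Submodule R L}

@[simp] theorem derivedSeriesOf_zero : S.derivedSeriesOf 0 = S := rfl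

theorem derivedSeriesOf_succ (i : ℕ) :
    S.derivedSeriesOf (i + 1) = ⁅S.derivedSeriesOf i, S.derivedSeriesOf i⁆ := rfl

theorem derivedSeriesOf_mono (h : T ≤ S) (i : ℕ) :
    T.derivedSeriesOf i ≤ S.derivedSeriesOf i := by
  induction i with
  | zero => exact h
  | succ i ih => exact lie_le_lie ih ih

theorem derivedSeriesOf_antitone (S : LieSubalgebra R L) : Antitone S.derivedSeriesOf := by
  refine antitone_nat_of_succ_le fun i ↦ ?_
  induction i with
  | zero => exact S.lie_toSubmodule_le
  | succ i ih => exact lie_le_lie ih ih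

theorem derivedSeriesOf_le (S : LieSubalgebra R L) (i : ℕ) : S.derivedSeriesOf i ≤ S :=
  S.derivedSeriesOf_antitone (Nat.zero_le i)

theorem lie_derivedSeriesOf_le (S : LieSubalgebra R L) (i : ℕ) :
    ⁅(S : Submodule R L), S.derivedSeriesOf i⁆ ≤ S.derivedSeriesOf i := by
  induction i with
  | zero => exact S.lie_toSubmodule_le
  | succ i ih =>
    exact (lie_lie_le _ _ _).trans (sup_le (lie_le_lie ih le_rfl) (lie_le_lie le_rfl ih))

theorem derivedSeriesOf_top (i : ℕ) :
    (⊤ : LieSubalgebra R L).derivedSeriesOf i = (LieAlgebra.derivedSeries R L i).toSubmodule := by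
  induction i with
  | zero => simp [LieAlgebra.derivedSeries_def]
  | succ i ih =>
    rw [derivedSeriesOf_succ, ih, LieAlgebra.derivedSeries_def, LieAlgebra.derivedSeries_def,
      LieAlgebra.derivedSeriesOfIdeal_succ, LieSubmodule.lieIdeal_oper_eq_linear_span']
    exact map₂_eq_span_image2 _ _ _

theorem derivedSeriesOf_le_sup (hTQ : (T : Submodule R L) ⊔ Q = S)
    (hQ : ⁅(S : Submodule R L), Q⁆ ≤ Q) (i : ℕ) :
    S.derivedSeriesOf i ≤ T.derivedSeriesOf i ⊔ Q := by
  induction i with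
  | zero => exact hTQ.ge
  | succ i ih =>
    set D := T.derivedSeriesOf i
    have hDQ : ⁅D, Q⁆ ≤ Q :=
      (lie_le_lie (((T.derivedSeriesOf_le i).trans le_sup_left).trans hTQ.le) le_rfl).trans hQ
    have hQQ : ⁅Q, Q⁆ ≤ Q := (lie_le_lie (le_sup_right.trans hTQ.le) le_rfl).trans hQ
    calc S.derivedSeriesOf (i + 1) ≤ ⁅D ⊔ Q, D ⊔ Q⁆ := lie_le_lie ih ih
      _ = ⁅D, D⁆ ⊔ ⁅D, Q⁆ ⊔ (⁅D, Q⁆ ⊔ ⁅Q, Q⁆) := by rw [sup_lie, lie_sup, lie_sup, lie_comm Q D]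
      _ ≤ T.derivedSeriesOf (i + 1) ⊔ Q :=
        sup_le (sup_le le_sup_left (le_sup_of_le_right hDQ)) (le_sup_of_le_right (sup_le hDQ hQQ))

theorem splitsOver_derivedSeriesOf_of_sup_eq (hTQ : (T : Submodule R L) ⊔ Q = S)
    (hTQ' : (T : Submodule R L) ⊓ Q = ⊥) (hQ : ⁅(S : Submodule R L), Q⁆ ≤ Q) {i : ℕ}
    (hQi : Q ≤ S.derivedSeriesOf i) (hT : T.SplitsOver (T.derivedSeriesOf i)) :
    S.SplitsOver (S.derivedSeriesOf i) := by
  obtain ⟨C, hCT, hC, hTC⟩ := hT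
  have hTS : T ≤ S := (toSubmodule_le_toSubmodule _ _).1 (le_sup_left.trans hTQ.le)
  have hD : S.derivedSeriesOf i = T.derivedSeriesOf i ⊔ Q :=
    (derivedSeriesOf_le_sup hTQ hQ i).antisymm (sup_le (derivedSeriesOf_mono hTS i) hQi)
  refine ⟨C, hCT.trans hTS, ?_, ?_⟩
  · calc S.derivedSeriesOf i ⊓ C = (T.derivedSeriesOf i ⊔ Q) ⊓ T ⊓ C := by
          rw [hD, inf_assoc, inf_eq_right.2 ((toSubmodule_le_toSubmodule _ _).2 hCT)]
      _ = ⊥ := by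
          rw [sup_inf_assoc_of_le _ (T.derivedSeriesOf_le i), inf_comm Q, hTQ', sup_bot_eq, hC]
  · rw [hD, sup_right_comm, hTC, hTQ]

theorem coe_mem_engel {S : LieSubalgebra R L} {x y : S} (h : y ∈ engel R x) :
    (y : L) ∈ engel R (x : L) := by
  obtain ⟨n, hn⟩ := (mem_engel_iff R x y).1 h
  exact (mem_engel_iff R _ _).2 ⟨n, by rw [← coe_ad_pow, hn, ZeroMemClass.coe_zero]⟩

end LieSubalgebra

namespace LieAlgebra

variable (R : Type*) {L : Type*} [CommRing R] [LieRing L] [LieAlgebra R L]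

def posFittingCompAd (x : L) : Submodule R L :=
  ⨅ n, LinearMap.range (ad R L x ^ n)

variable {R}

theorem lie_mem_range_ad_pow {x a : L} {k : ℕ} (ha : (ad R L x ^ k) a = 0) (n : ℕ) (y : L) :
    ⁅a, (ad R L x ^ (n + k)) y⁆ ∈ LinearMap.range (ad R L x ^ n) := by
  induction k generalizing a n with
  | zero => simp_all
  | succ k ihk =>
    induction n with
    | zero => simp
    | succ n ihn =>
      set t := (ad R L x ^ (n + (k + 1))) y
      have ht : (ad R L x ^ (n + 1 + (k + 1))) y = ⁅x, t⁆ := by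
        rw [show n + 1 + (k + 1) = n + (k + 1) + 1 by omega, pow_succ', Module.End.mul_apply,
          ad_apply R L]
      have hder : ⁅a, ⁅x, t⁆⁆ = ⁅x, ⁅a, t⁆⁆ - ⁅⁅x, a⁆, t⁆ := by
        rw [leibniz_lie x a t]; abel
      obtain ⟨z, hz⟩ := ihn
      have hxa : (ad R L x ^ k) ⁅x, a⁆ = 0 := by
        rwa [← ad_apply R L, ← Module.End.mul_apply, ← pow_succ]
      rw [ht, hder, ← hz, ← ad_apply R L x, ← Module.End.mul_apply, ← pow_succ']
      refine sub_mem (LinearMap.mem_range_self _ z) ?_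
      simpa [t, show n + (k + 1) = n + 1 + k by omega] using ihk hxa (n + 1)

theorem lie_mem_posFittingCompAd {x a y : L} (ha : a ∈ LieSubalgebra.engel R x)
    (hy : y ∈ posFittingCompAd R x) : ⁅a, y⁆ ∈ posFittingCompAd R x := by
  obtain ⟨k, hk⟩ := (LieSubalgebra.mem_engel_iff R x a).1 ha
  simp only [posFittingCompAd, Submodule.mem_iInf] at hy ⊢
  intro n
  obtain ⟨z, rfl⟩ := hy (n + k)
  exact lie_mem_range_ad_pow hk n z

theorem isCompl_engel_posFittingCompAd [IsNoetherian R L] [IsArtinian R L] (x : L) :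
    IsCompl (LieSubalgebra.engel R x : Submodule R L) (posFittingCompAd R x) := by
  have : (LieSubalgebra.engel R x : Submodule R L) = ⨆ n, LinearMap.ker (ad R L x ^ n) := by
    simp [LieSubalgebra.engel, ← Module.End.iSup_genEigenspace_eq]
  rw [this]
  exact LinearMap.isCompl_iSup_ker_pow_iInf_range_pow _

end LieAlgebra

open LieAlgebra LieSubalgebra Submodule

section Field

variable {F L : Type*} [Field F] [LieRing L] [LieAlgebra F L] [FiniteDimensional F L]

theorem LieSubalgebra.exists_fitting_decomposition (S : LieSubalgebra F L) (x y : S)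
    (hxy : (y : L) ∉ engel F (x : L)) :
    ∃ (T : LieSubalgebra F L) (Q : Submodule F L), T < S ∧ (T : Submodule F L) ⊔ Q = S ∧
      (T : Submodule F L) ⊓ Q = ⊥ ∧ ⁅(T : Submodule F L), Q⁆ ≤ Q ∧
      Q ≤ (S : Submodule F L).map (ad F L x ^ 2) := by
  have hc : IsCompl (engel F x : Submodule F S) (posFittingCompAd F x) :=
    isCompl_engel_posFittingCompAd x
  have hT : (((engel F x).map S.incl : LieSubalgebra F L) : Submodule F L) =
      (engel F x : Submodule F S).map (S.incl : S →ₗ[F] L) := rfl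
  refine ⟨(engel F x).map S.incl, (posFittingCompAd F x).map (S.incl : S →ₗ[F] L),
    ?_, ?_, ?_, ?_, ?_⟩
  · refine SetLike.lt_iff_le_and_exists.2 ⟨?_, (y : L), y.2, ?_⟩
    · rintro _ ⟨a, -, rfl⟩
      exact a.2
    · rintro ⟨a, ha, hay⟩
      rw [← Subtype.ext hay] at hxy
      exact hxy (coe_mem_engel ha)
  · rw [hT, ← Submodule.map_sup, hc.sup_eq_top, Submodule.map_top]
    exact (S : Submodule F L).range_subtype
  · rw [hT, ← Submodule.map_inf _ Subtype.val_injective, hc.inf_eq_bot, Submodule.map_bot]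
  · refine lie_le_iff.2 ?_
    rintro _ ⟨a, ha, rfl⟩ _ ⟨b, hb, rfl⟩
    exact ⟨⁅a, b⁆, lie_mem_posFittingCompAd ha hb, rfl⟩
  · rintro _ ⟨q, hq, rfl⟩
    obtain ⟨s, rfl⟩ := mem_iInf _ |>.1 hq 2
    exact ⟨s, s.2, (coe_ad_pow F L S x s 2).symm⟩

theorem IsAAlgebra.exists_notMem_engel (hA : IsAAlgebra F L) {K : Submodule F L}
    (hK : ⁅K, K⁆ ≤ K) (hKK : ⁅K, K⁆ ≠ ⊥) : ∃ x ∈ K, ∃ y ∈ K, y ∉ engel F x := by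
  let K' : LieSubalgebra F L := { K with lie_mem' := fun hx hy ↦ hK (lie_mem_lie hx hy) }
  by_contra! h
  have : IsLieAbelian K' := hA K' (isNilpotent_of_forall_le_engel K' fun x hx y hy ↦ h x hx y hy)
  refine hKK (eq_bot_iff.2 (lie_le_iff.2 fun x hx y hy ↦ ?_))
  exact congrArg Subtype.val (trivial_lie_zero K' K' ⟨x, hx⟩ ⟨y, hy⟩)

theorem IsAAlgebra.exists_fitting_decomposition_derivedSeriesOf (hA : IsAAlgebra F L)
    (S : LieSubalgebra F L) {e : ℕ} (habel : S.derivedSeriesOf (e + 2) = ⊥)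
    (hne : S.derivedSeriesOf (e + 1) ≠ ⊥) :
    ∃ (T : LieSubalgebra F L) (Q : Submodule F L), T < S ∧ (T : Submodule F L) ⊔ Q = S ∧
      (T : Submodule F L) ⊓ Q = ⊥ ∧ ⁅(S : Submodule F L), Q⁆ ≤ Q ∧
      Q ≤ S.derivedSeriesOf (e + 1) := by
  set K := S.derivedSeriesOf e
  have hKS : K ≤ S := S.derivedSeriesOf_le e
  obtain ⟨x, hxK, y, hyK, hxy⟩ :=
    hA.exists_notMem_engel (S.derivedSeriesOf_antitone e.le_succ) hne
  obtain ⟨T, Q, hTS, hsup, hinf, hTQ, hQx⟩ :=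
    S.exists_fitting_decomposition ⟨x, hKS hxK⟩ ⟨y, hKS hyK⟩ hxy
  have hQA : Q ≤ S.derivedSeriesOf (e + 1) := by
    refine hQx.trans ?_
    rintro _ ⟨s, hs, rfl⟩
    have hxs : ⁅x, s⁆ ∈ K := (lie_comm K S ▸ S.lie_derivedSeriesOf_le e) (lie_mem_lie hxK hs)
    rw [pow_two, Module.End.mul_apply, ad_apply, ad_apply]
    exact lie_mem_lie hxK hxs
  have hQQ : ⁅Q, Q⁆ = ⊥ := le_bot_iff.1 (habel ▸ lie_le_lie hQA hQA)
  refine ⟨T, Q, hTS, hsup, hinf, ?_, hQA⟩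
  rw [← hsup, sup_lie, hQQ, sup_bot_eq]
  exact hTQ

theorem IsAAlgebra.splitsOver_derivedSeriesOf [IsSolvable L] (hA : IsAAlgebra F L)
    (S : LieSubalgebra F L) (i : ℕ) : S.SplitsOver (S.derivedSeriesOf i) := by
  induction S using WellFoundedLT.induction generalizing i with | _ S ih =>
  obtain _ | i := i
  · exact ⟨⊥, bot_le, by simp, by simp⟩
  by_cases hi : S.derivedSeriesOf (i + 1) = ⊥
  · exact ⟨S, le_rfl, by simp [hi], by simp [hi]⟩
  have hsolv : ∃ n, S.derivedSeriesOf (i + 1 + n) = ⊥ := by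
    obtain ⟨n, hn⟩ := IsSolvable.solvable (R := F) (L := L)
    refine ⟨n, le_bot_iff.1 ?_⟩
    calc S.derivedSeriesOf (i + 1 + n) ≤ (⊤ : LieSubalgebra F L).derivedSeriesOf n :=
          (S.derivedSeriesOf_antitone (Nat.le_add_left n _)).trans (derivedSeriesOf_mono le_top n)
      _ = ⊥ := by rw [derivedSeriesOf_top, hn, LieSubmodule.bot_toSubmodule]
  obtain ⟨n, hne, habel⟩ := Nat.exists_not_and_succ_of_not_zero_of_exists hi hsolv
  rw [show i + 1 + (n + 1) = i + n + 2 by omega] at habel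
  rw [Nat.add_right_comm] at hne
  obtain ⟨T, Q, hTS, hsup, hinf, hSQ, hQ⟩ :=
    hA.exists_fitting_decomposition_derivedSeriesOf S habel hne
  exact splitsOver_derivedSeriesOf_of_sup_eq hsup hinf hSQ
    (hQ.trans (S.derivedSeriesOf_antitone (by omega))) (ih T hTS (i + 1))

end Field

theorem splits_over_derived_series (F L : Type*) [Field F] [LieRing L] [LieAlgebra F L]
    [FiniteDimensional F L] [LieAlgebra.IsSolvable L] (hA : IsAAlgebra F L) (i : ℕ) :
    ∃ B : LieSubalgebra F L,
      (LieAlgebra.derivedSeries F L i).toSubmodule ⊓ B.toSubmodule = ⊥ ∧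
      (LieAlgebra.derivedSeries F L i).toSubmodule ⊔ B.toSubmodule = ⊤ := by
  obtain ⟨B, -, hB⟩ := hA.splitsOver_derivedSeriesOf ⊤ i
  rw [derivedSeriesOf_top, top_toSubmodule] at hB
  exact ⟨B, hB⟩
end

section
/- Let L be a finite-dimensional solvable Lie A-algebra over a field F, let A be a minimal ideal of L, and suppose A ⊆ L^(i) but A ⊄ L^(i+1). Then [L^(i), A] = 0, i.e., A is contained in the centre of the subalgebra L^(i). -/
section

variable {R L : Type*} [CommRing R] [LieRing L] [LieAlgebra R L]

theorem LieIdeal.eq_bot_of_le_of_le_of_not_le {A I K : LieIdeal R L}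
    (hAmin : ∀ J : LieIdeal R L, J ≤ A → J = ⊥ ∨ J = A)
    (hIA : I ≤ A) (hIK : I ≤ K) (hAK : ¬ A ≤ K) : I = ⊥ :=
  (hAmin I hIA).resolve_right fun hI ↦ hAK (hI ▸ hIK)

theorem LieAlgebra.lie_derivedSeries_le_derivedSeries_succ {A : LieIdeal R L} {i : ℕ}
    (hle : A ≤ derivedSeries R L i) :
    ⁅derivedSeries R L i, A⁆ ≤ derivedSeries R L (i + 1) :=
  (LieSubmodule.mono_lie le_rfl hle).trans (derivedSeriesOfIdeal_succ R L ⊤ i).ge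

end

theorem minimal_ideal_central_in_derived_general (F L : Type*) [Field F] [LieRing L] [LieAlgebra F L]
    (A : LieIdeal F L)
    (hAmin : ∀ I : LieIdeal F L, I ≤ A → I = ⊥ ∨ I = A)
    (i : ℕ) (hle : A ≤ LieAlgebra.derivedSeries F L i)
    (hnle : ¬ A ≤ LieAlgebra.derivedSeries F L (i + 1)) :
    ⁅LieAlgebra.derivedSeries F L i, A⁆ = (⊥ : LieIdeal F L) :=
  LieIdeal.eq_bot_of_le_of_le_of_not_le hAmin (LieSubmodule.lie_le_right A _)
    (LieAlgebra.lie_derivedSeries_le_derivedSeries_succ hle) hnle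

theorem minimal_ideal_central_in_derived (F L : Type*) [Field F] [LieRing L] [LieAlgebra F L]
    [FiniteDimensional F L] [LieAlgebra.IsSolvable L] (hA : IsAAlgebra F L)
    (A : LieIdeal F L) (hAne : A ≠ ⊥)
    (hAmin : ∀ I : LieIdeal F L, I ≤ A → I = ⊥ ∨ I = A)
    (i : ℕ) (hle : A ≤ LieAlgebra.derivedSeries F L i)
    (hnle : ¬ A ≤ LieAlgebra.derivedSeries F L (i + 1)) :
    ⁅LieAlgebra.derivedSeries F L i, A⁆ = (⊥ : LieIdeal F L) :=
  minimal_ideal_central_in_derived_general F L A hAmin i hle hnle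
end

section
/- Let L be a finite-dimensional Lie A-algebra over a field F and let B, D be ideals of L. Then [B, D] = 0 if and only if [B ∩ D, B] = 0 and [B ∩ D, D] = 0 (that is, B centralizes D if and only if B ∩ D ⊆ Z(B) ∩ Z(D)). -/
/-!
For `b ∈ B` and `d ∈ D` the bracket `⁅b, d⁆` lies in `B ⊓ D`, so under the right-hand side it
commutes with `b` and `d`. Then `span {b, d, ⁅b, d⁆}` is a Lie subalgebra all of whose brackets
are multiples of the central element `⁅b, d⁆`; it is nilpotent of class at most two, hence abelian
in an `A`-algebra, and so `⁅b, d⁆ = 0`.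
-/

open Submodule

lemma LieRing.isNilpotent_of_forall_lie_lie_eq_zero {K : Type*} [LieRing K]
    (h : ∀ x y z : K, ⁅⁅x, y⁆, z⁆ = 0) : LieRing.IsNilpotent K := by
  have hcentral : ⁅(⊤ : LieIdeal ℤ K), ⊤⁆ ≤ LieModule.maxTrivSubmodule ℤ K K := by
    rw [LieSubmodule.lie_le_iff]
    intro x _ y _ z
    rw [← lie_skew, h, neg_zero]
  refine (LieModule.isNilpotent_iff ℤ K K).mpr ⟨2, le_bot_iff.mp ?_⟩
  calc LieModule.lowerCentralSeries ℤ K K 2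
      = ⁅(⊤ : LieIdeal ℤ K), ⁅(⊤ : LieIdeal ℤ K), ⊤⁆⁆ := rfl
    _ ≤ ⁅(⊤ : LieIdeal ℤ K), LieModule.maxTrivSubmodule ℤ K K⁆ :=
        LieSubmodule.mono_lie_right _ hcentral
    _ = ⊥ := LieModule.ideal_oper_maxTrivSubmodule_eq_bot ℤ K K ⊤

section
variable {R L : Type*} [CommRing R] [LieRing L] [LieAlgebra R L]

lemma lie_mem_of_mem_span {s : Set L} {M : Submodule R L} (h : ∀ a ∈ s, ∀ b ∈ s, ⁅a, b⁆ ∈ M)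
    {y z : L} (hy : y ∈ span R s) (hz : z ∈ span R s) : ⁅y, z⁆ ∈ M := by
  induction hy, hz using Submodule.span_induction₂ with
  | mem_mem a b ha hb => exact h a ha b hb
  | zero_left => simp
  | zero_right => simp
  | add_left _ _ _ _ _ _ h₁ h₂ => rw [add_lie]; exact add_mem h₁ h₂
  | add_right _ _ _ _ _ _ h₁ h₂ => rw [lie_add]; exact add_mem h₁ h₂
  | smul_left _ _ _ _ _ h => rw [smul_lie]; exact smul_mem _ _ h
  | smul_right _ _ _ _ _ h => rw [lie_smul]; exact smul_mem _ _ h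

variable {b d : L}

lemma lie_mem_span_singleton_of_mem_span (hb : ⁅b, ⁅b, d⁆⁆ = 0) (hd : ⁅d, ⁅b, d⁆⁆ = 0) {y z : L}
    (hy : y ∈ span R {b, d, ⁅b, d⁆}) (hz : z ∈ span R {b, d, ⁅b, d⁆}) :
    ⁅y, z⁆ ∈ R ∙ ⁅b, d⁆ := by
  refine lie_mem_of_mem_span ?_ hy hz
  simp only [Set.mem_insert_iff, Set.mem_singleton_iff]
  have hbd : ⁅b, d⁆ ∈ R ∙ ⁅b, d⁆ := mem_span_singleton_self _
  have hdb : ⁅d, b⁆ ∈ R ∙ ⁅b, d⁆ := by rw [← lie_skew d b]; exact neg_mem hbd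
  have hxb : ⁅⁅b, d⁆, b⁆ = 0 := by rw [← lie_skew, hb, neg_zero]
  have hxd : ⁅⁅b, d⁆, d⁆ = 0 := by rw [← lie_skew, hd, neg_zero]
  rintro a (rfl | rfl | rfl) c (rfl | rfl | rfl) <;> simp [hb, hd, hxb, hxd, hbd, hdb]

lemma lie_eq_zero_of_mem_span (hb : ⁅b, ⁅b, d⁆⁆ = 0) (hd : ⁅d, ⁅b, d⁆⁆ = 0) {y : L}
    (hy : y ∈ span R {b, d, ⁅b, d⁆}) : ⁅⁅b, d⁆, y⁆ = 0 := by
  suffices span R {b, d, ⁅b, d⁆} ≤ LinearMap.ker (LieAlgebra.ad R L ⁅b, d⁆) from this hy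
  rw [span_le]
  simp only [Set.insert_subset_iff, Set.singleton_subset_iff, SetLike.mem_coe, LinearMap.mem_ker,
    LieAlgebra.ad_apply]
  exact ⟨by rw [← lie_skew, hb, neg_zero], by rw [← lie_skew, hd, neg_zero], lie_self _⟩

lemma lie_lie_eq_zero_of_mem_span (hb : ⁅b, ⁅b, d⁆⁆ = 0) (hd : ⁅d, ⁅b, d⁆⁆ = 0) {x y z : L}
    (hx : x ∈ span R {b, d, ⁅b, d⁆}) (hy : y ∈ span R {b, d, ⁅b, d⁆})
    (hz : z ∈ span R {b, d, ⁅b, d⁆}) : ⁅⁅x, y⁆, z⁆ = 0 := by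
  obtain ⟨c, hc⟩ := mem_span_singleton.mp (lie_mem_span_singleton_of_mem_span hb hd hx hy)
  rw [← hc, smul_lie, lie_eq_zero_of_mem_span hb hd hz, smul_zero]

variable (R) in
def heisenbergSubalgebra (hb : ⁅b, ⁅b, d⁆⁆ = 0) (hd : ⁅d, ⁅b, d⁆⁆ = 0) : LieSubalgebra R L where
  toSubmodule := span R {b, d, ⁅b, d⁆}
  lie_mem' hy hz :=
    span_mono (by simp) (lie_mem_span_singleton_of_mem_span hb hd hy hz)

lemma isNilpotent_heisenbergSubalgebra (hb : ⁅b, ⁅b, d⁆⁆ = 0) (hd : ⁅d, ⁅b, d⁆⁆ = 0) :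
    LieRing.IsNilpotent (heisenbergSubalgebra R hb hd) :=
  LieRing.isNilpotent_of_forall_lie_lie_eq_zero fun x y z ↦
    Subtype.ext (lie_lie_eq_zero_of_mem_span hb hd x.2 y.2 z.2)

end

lemma IsAAlgebra.lie_eq_zero {F L : Type*} [Field F] [LieRing L] [LieAlgebra F L]
    (hA : IsAAlgebra F L) {b d : L} (hb : ⁅b, ⁅b, d⁆⁆ = 0) (hd : ⁅d, ⁅b, d⁆⁆ = 0) :
    ⁅b, d⁆ = 0 := by
  have hab := hA _ (isNilpotent_heisenbergSubalgebra hb hd)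
  exact congrArg Subtype.val (hab.trivial ⟨b, subset_span (by simp)⟩ ⟨d, subset_span (by simp)⟩)

theorem centralize_iff_inf_central_general (F L : Type*) [Field F] [LieRing L] [LieAlgebra F L]
    (hA : IsAAlgebra F L) (B D : LieIdeal F L) :
    ⁅B, D⁆ = (⊥ : LieIdeal F L) ↔
      (⁅B ⊓ D, B⁆ = (⊥ : LieIdeal F L) ∧ ⁅B ⊓ D, D⁆ = (⊥ : LieIdeal F L)) := by
  constructor
  · intro h
    refine ⟨le_bot_iff.mp ?_, le_bot_iff.mp ?_⟩
    · calc ⁅B ⊓ D, B⁆ ≤ ⁅D, B⁆ := LieSubmodule.mono_lie inf_le_right le_rfl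
        _ = ⊥ := by rw [LieSubmodule.lie_comm, h]
    · exact (LieSubmodule.mono_lie inf_le_left le_rfl).trans h.le
  · rintro ⟨hB, hD⟩
    rw [LieSubmodule.lie_eq_bot_iff] at hB hD ⊢
    intro b hb d hd
    have hbd : ⁅b, d⁆ ∈ B ⊓ D := ⟨lie_mem_left F L B b d hb, lie_mem_right F L D b d hd⟩
    refine hA.lie_eq_zero ?_ ?_
    · rw [← lie_skew, hB _ hbd b hb, neg_zero]
    · rw [← lie_skew, hD _ hbd d hd, neg_zero]

theorem centralize_iff_inf_central (F L : Type*) [Field F] [LieRing L] [LieAlgebra F L]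
    [FiniteDimensional F L] (hA : IsAAlgebra F L) (B D : LieIdeal F L) :
    ⁅B, D⁆ = (⊥ : LieIdeal F L) ↔
      (⁅B ⊓ D, B⁆ = (⊥ : LieIdeal F L) ∧ ⁅B ⊓ D, D⁆ = (⊥ : LieIdeal F L)) :=
  centralize_iff_inf_central_general F L hA B D
end

section
/- Let L be a finite-dimensional strongly solvable Lie A-algebra over a field F and let A be a minimal ideal of L. Then either A ⊆ [L, L] or A ⊆ Z(L); moreover, A ⊆ [L, L] if and only if [L, A] = A. -/
/-!
Put `V = [L, L]`. It is abelian, so `L` acts on `V` through an abelian algebra `E` of commuting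
operators, and `V = V₀ ⊕ V₊` is the Fitting decomposition over `E`. A central element of `L` lying
in `V` lies in `V₀`, so it vanishes as soon as every bracket `[x, y]` lies in `V₊`.

To see this, let `E'` be the span of `X = ad x|_V` and `Y = ad y|_V` and write
`[x, y] = c₀ + X p + Y q` with `c₀ ∈ V₀(E')`, using `V₊(E') ⊆ X V + Y V`. The corrected elements
`x + q` and `y - p` have bracket `c₀`, and together with `V₀(E')` they span a subalgebra which acts
nilpotently on itself. In an `A`-algebra it is abelian, so `c₀ = 0` and `[x, y] ∈ V₊(E') ⊆ V₊(E)`.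

For the minimal ideal `A`, `[L, A]` is `0` or `A`: in the first case `A` is central, so it meets
`[L, L]` trivially; in the second `A = [L, A] ⊆ [L, L]`.
-/

open LieAlgebra LieModule

attribute [local instance 100] LieRing.ofAssociativeRing

theorem lie_mem_span_lie_of_mem_span_pair {R L : Type*} [CommRing R] [LieRing L]
    [LieAlgebra R L] {a b u v : L} (hu : u ∈ Submodule.span R {a, b})
    (hv : v ∈ Submodule.span R {a, b}) :
    ⁅u, v⁆ ∈ Submodule.span R {⁅a, b⁆} := by
  obtain ⟨α, β, rfl⟩ := Submodule.mem_span_pair.mp hu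
  obtain ⟨γ, δ, rfl⟩ := Submodule.mem_span_pair.mp hv
  refine Submodule.mem_span_singleton.mpr ⟨α * δ - β * γ, ?_⟩
  simp only [add_lie, lie_add, smul_lie, lie_smul, lie_self, smul_zero, add_zero, zero_add,
    ← lie_skew a b, smul_neg, sub_smul, smul_smul, mul_comm]
  abel

namespace LieModule

variable {R L M : Type*} [CommRing R] [LieRing L] [LieAlgebra R L] [AddCommGroup M] [Module R M]
  [LieRingModule L M] [LieModule R L M]

theorem posFittingComp_le_of_le {H K : LieSubalgebra R L} [LieRing.IsNilpotent H]
    [LieRing.IsNilpotent K] (h : H ≤ K) :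
    (posFittingComp R H M : Submodule R M) ≤ posFittingComp R K M := by
  rw [posFittingComp, posFittingComp, LieSubmodule.iSup_toSubmodule,
    LieSubmodule.iSup_toSubmodule]
  exact iSup_le fun x ↦ le_iSup_of_le (⟨x, h x.2⟩ : K) le_rfl

theorem posFittingComp_le_range_sup_range {X Y : Module.End R M}
    (E : LieSubalgebra R (Module.End R M)) [LieRing.IsNilpotent E]
    (hE : ∀ e ∈ E, e ∈ Submodule.span R {X, Y}) :
    (posFittingComp R E M : Submodule R M) ≤ LinearMap.range X ⊔ LinearMap.range Y := by
  rw [posFittingComp, LieSubmodule.iSup_toSubmodule]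
  refine iSup_le fun e m hm ↦ ?_
  obtain ⟨n, rfl⟩ := (mem_posFittingCompOf R e m).mp hm 1
  obtain ⟨α, β, he⟩ := Submodule.mem_span_pair.mp (hE e e.2)
  have hn : (toEnd R E M e ^ 1) n = X (α • n) + Y (β • n) := by simp [← he]
  rw [hn]
  exact Submodule.add_mem_sup (LinearMap.mem_range_self _ _) (LinearMap.mem_range_self _ _)

end LieModule

namespace LieIdeal

variable {R L : Type*} [CommRing R] [LieRing L] [LieAlgebra R L] {V : LieIdeal R L}

theorem toEnd_eq_zero_of_mem [IsLieAbelian V] {v : L} (hv : v ∈ V) : toEnd R L V v = 0 := by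
  ext w
  exact congrArg Subtype.val (trivial_lie_zero V V ⟨v, hv⟩ w)

variable {E : LieSubalgebra R (Module.End R V)} [LieRing.IsNilpotent E]

theorem lie_mem_map_genWeightSpace_zero {g k : L} (hg : toEnd R L V g ∈ E)
    (hk : k ∈ (genWeightSpace V (0 : E → R) : Submodule R V).map
      (LieSubmodule.toSubmodule V).subtype) :
    ⁅g, k⁆ ∈ (genWeightSpace V (0 : E → R) : Submodule R V).map
      (LieSubmodule.toSubmodule V).subtype := by
  obtain ⟨w, hw, rfl⟩ := hk
  exact ⟨_, (genWeightSpace V (0 : E → R)).lie_mem (x := ⟨_, hg⟩) hw, rfl⟩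

theorem mem_engel_of_mem_map_genWeightSpace_zero {g k : L} (hg : toEnd R L V g ∈ E)
    (hk : k ∈ (genWeightSpace V (0 : E → R) : Submodule R V).map
      (LieSubmodule.toSubmodule V).subtype) :
    k ∈ LieSubalgebra.engel R g := by
  obtain ⟨w, hw, rfl⟩ := hk
  obtain ⟨n, hn⟩ := (mem_genWeightSpace _ _ _).mp hw ⟨_, hg⟩
  rw [Pi.zero_apply, zero_smul, sub_zero] at hn
  refine (LieSubalgebra.mem_engel_iff R g _).mpr ⟨n, ?_⟩
  exact (LieSubmodule.coe_toEnd_pow R L L V g w n).symm.trans (congrArg Subtype.val hn)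

end LieIdeal

namespace IsAAlgebra

variable {F L : Type*} [Field F] [LieRing L] [LieAlgebra F L] [FiniteDimensional F L]

theorem lie_eq_zero_of_lie_mem_genWeightSpace_zero (hA : IsAAlgebra F L) {V : LieIdeal F L}
    [IsLieAbelian V] {E : LieSubalgebra F (Module.End F V)} [LieRing.IsNilpotent E] {a b : L}
    (ha : toEnd F L V a ∈ E) (hb : toEnd F L V b ∈ E)
    (hab : ⁅a, b⁆ ∈ (genWeightSpace V (0 : E → F) : Submodule F V).map
      (LieSubmodule.toSubmodule V).subtype) :
    ⁅a, b⁆ = 0 := by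
  set K := (genWeightSpace V (0 : E → F) : Submodule F V).map (LieSubmodule.toSubmodule V).subtype
  set P := Submodule.span F {a, b} ⊔ K
  have hPE : P ≤ (E.comap (toEnd F L V)).toSubmodule := by
    refine sup_le (Submodule.span_le.mpr ?_) ?_
    · rintro _ (rfl | rfl)
      exacts [ha, hb]
    · rintro _ ⟨w, -, rfl⟩
      simp [LieIdeal.toEnd_eq_zero_of_mem w.2, E.zero_mem]
  have hPK : ∀ u ∈ P, ∀ v ∈ P, ⁅u, v⁆ ∈ K := by
    intro u hu v hv
    obtain ⟨s, hs, k, hk, rfl⟩ := Submodule.mem_sup.mp hu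
    obtain ⟨s', hs', k', hk', rfl⟩ := Submodule.mem_sup.mp hv
    have hss' : ⁅s, s'⁆ ∈ K := Submodule.span_le.mpr (Set.singleton_subset_iff.mpr hab)
      (lie_mem_span_lie_of_mem_span_pair hs hs')
    rw [lie_add, add_lie, ← lie_skew k s', ← sub_eq_add_neg]
    exact K.add_mem (K.sub_mem hss'
      (LieIdeal.lie_mem_map_genWeightSpace_zero (hPE (Submodule.mem_sup_left hs')) hk))
      (LieIdeal.lie_mem_map_genWeightSpace_zero (hPE hu) hk')
  let U : LieSubalgebra F L :=
    { toSubmodule := P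
      lie_mem' := fun hu hv ↦ Submodule.mem_sup_right (hPK _ hu _ hv) }
  have hU : LieRing.IsNilpotent U := by
    refine LieSubalgebra.isNilpotent_of_forall_le_engel U fun u hu v hv ↦ ?_
    obtain ⟨n, hn⟩ := (LieSubalgebra.mem_engel_iff F u _).mp
      (LieIdeal.mem_engel_of_mem_map_genWeightSpace_zero (hPE hu) (hPK u hu v hv))
    exact (LieSubalgebra.mem_engel_iff F u v).mpr ⟨n + 1, by rwa [pow_succ, Module.End.mul_apply]⟩
  have haU : a ∈ U := Submodule.mem_sup_left (Submodule.subset_span (Set.mem_insert a _))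
  have hbU : b ∈ U := Submodule.mem_sup_left (Submodule.subset_span (Set.mem_insert_of_mem a rfl))
  exact congrArg Subtype.val ((hA U hU).trivial ⟨a, haU⟩ ⟨b, hbU⟩)

theorem lie_mem_posFittingComp (hA : IsAAlgebra F L) {V : LieIdeal F L} [IsLieAbelian V]
    {E : LieSubalgebra F (Module.End F V)} [LieRing.IsNilpotent E] {x y : L}
    (hx : toEnd F L V x ∈ E) (hy : toEnd F L V y ∈ E) (hxy : ⁅x, y⁆ ∈ V) :
    (⟨⁅x, y⁆, hxy⟩ : V) ∈ posFittingComp F E V := by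
  set X := toEnd F L V x
  set Y := toEnd F L V y
  have hXY : ∀ᵉ (f ∈ ({X, Y} : Set (Module.End F V))) (g ∈ ({X, Y} : Set (Module.End F V))),
      ⁅f, g⁆ = 0 := by
    have h : ⁅X, Y⁆ = 0 := by rw [← LieHom.map_lie]; exact LieIdeal.toEnd_eq_zero_of_mem hxy
    rintro _ (rfl | rfl) _ (rfl | rfl)
    · exact lie_self _
    · exact h
    · rw [← lie_skew, h, neg_zero]
    · exact lie_self _
  set E' := LieSubalgebra.lieSpan F (Module.End F V) {X, Y}
  have : IsLieAbelian E' := LieSubalgebra.isLieAbelian_lieSpan_iff.mpr hXY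
  have hE'E : E' ≤ E := LieSubalgebra.lieSpan_le.mpr (by
    rintro _ (rfl | rfl)
    exacts [hx, hy])
  obtain ⟨c₀, hc₀, c₁, hc₁, hc⟩ := Submodule.mem_sup.mp <|
    (LieSubmodule.sup_toSubmodule _ _).le <|
    (isCompl_genWeightSpace_zero_posFittingComp F E' V).sup_eq_top.ge
      (LieSubmodule.mem_top (⟨⁅x, y⁆, hxy⟩ : V))
  have hc₁XY : c₁ ∈ LinearMap.range X ⊔ LinearMap.range Y :=
    posFittingComp_le_range_sup_range E' (fun e he ↦ by
      rwa [← LieSubalgebra.coe_lieSpan_eq_span_of_forall_lie_eq_zero hXY]) hc₁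
  obtain ⟨_, ⟨p, rfl⟩, _, ⟨q, rfl⟩, hpq⟩ := Submodule.mem_sup.mp hc₁XY
  have hlie : ⁅x + q, y - p⁆ = (c₀ : L) := by
    have hqp : ⁅(q : L), (p : L)⁆ = 0 := congrArg Subtype.val (trivial_lie_zero V V q p)
    have hc' : ⁅x, y⁆ = (c₀ : L) + (⁅x, (p : L)⁆ + ⁅y, (q : L)⁆) := by
      rw [← hpq] at hc
      exact congrArg Subtype.val hc.symm
    rw [lie_sub, add_lie, add_lie, hqp, ← lie_skew (q : L) y, hc']
    abel
  have hc₀ : c₀ = 0 := by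
    refine Subtype.ext (hlie.symm.trans ?_)
    refine hA.lie_eq_zero_of_lie_mem_genWeightSpace_zero (E := E') ?_ ?_ ⟨c₀, hc₀, hlie.symm⟩
    · rw [map_add, LieIdeal.toEnd_eq_zero_of_mem q.2, add_zero]
      exact LieSubalgebra.subset_lieSpan (Set.mem_insert X _)
    · rw [map_sub, LieIdeal.toEnd_eq_zero_of_mem p.2, sub_zero]
      exact LieSubalgebra.subset_lieSpan (Set.mem_insert_of_mem X rfl)
  rw [← hc, hc₀, zero_add]
  exact posFittingComp_le_of_le hE'E hc₁

theorem disjoint_derivedSeries_center (hA : IsAAlgebra F L)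
    (hss : LieRing.IsNilpotent (derivedSeries F L 1)) :
    Disjoint (derivedSeries F L 1) (center F L) := by
  set V := derivedSeries F L 1
  have : IsLieAbelian V := hA (LieIdeal.toLieSubalgebra F L V) hss
  have hlie : ∀ x y : L, ⁅x, y⁆ ∈ V := fun x y ↦
    LieSubmodule.lie_mem_lie (LieSubmodule.mem_top x) (LieSubmodule.mem_top y)
  set E := (toEnd F L V).range
  have : IsLieAbelian E := ⟨by
    rintro ⟨_, x, rfl⟩ ⟨_, y, rfl⟩
    exact Subtype.ext ((LieHom.map_lie _ x y).symm.trans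
      (LieIdeal.toEnd_eq_zero_of_mem (hlie x y)))⟩
  have hV : LieSubmodule.toSubmodule V ≤
      (posFittingComp F E V : Submodule F V).map (LieSubmodule.toSubmodule V).subtype := by
    refine (coe_derivedSeries_one_eq F L).le.trans (Submodule.span_le.mpr ?_)
    rintro _ ⟨x, y, rfl⟩
    exact ⟨_, hA.lie_mem_posFittingComp (E := E) ⟨x, rfl⟩ ⟨y, rfl⟩ (hlie x y), rfl⟩
  rw [disjoint_iff_inf_le]
  rintro a ⟨haV, haZ⟩
  obtain ⟨w, hw, rfl⟩ := hV haV
  have hw₀ : w ∈ genWeightSpace V (0 : E → F) := by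
    refine (mem_genWeightSpace _ _ _).mpr ?_
    rintro ⟨_, x, rfl⟩
    exact ⟨1, by rw [pow_one, Pi.zero_apply, zero_smul, sub_zero]; exact Subtype.ext (haZ x)⟩
  have hw0 : w = 0 := (LieSubmodule.mem_bot w).mp <|
    (isCompl_genWeightSpace_zero_posFittingComp F E V).disjoint.le_bot
      ((LieSubmodule.mem_inf _ _ _).mpr ⟨hw₀, hw⟩)
  simp [hw0]

end IsAAlgebra

theorem minimal_ideal_location (F L : Type*) [Field F] [LieRing L] [LieAlgebra F L]
    [FiniteDimensional F L] (hA : IsAAlgebra F L)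
    (hss : LieRing.IsNilpotent (LieAlgebra.derivedSeries F L 1))
    (A : LieIdeal F L) (hAne : A ≠ ⊥)
    (hAmin : ∀ I : LieIdeal F L, I ≤ A → I = ⊥ ∨ I = A) :
    (A ≤ LieAlgebra.derivedSeries F L 1 ∨ A ≤ LieAlgebra.center F L) ∧
    (A ≤ LieAlgebra.derivedSeries F L 1 ↔ ⁅(⊤ : LieIdeal F L), A⁆ = A) := by
  rcases hAmin _ (LieSubmodule.lie_le_right A ⊤) with hbot | heq
  · have hAZ : A ≤ center F L := fun a ha x ↦
      (LieSubmodule.lie_eq_bot_iff _ _).mp hbot x (LieSubmodule.mem_top x) a ha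
    have hAD : ¬A ≤ derivedSeries F L 1 := fun hAD ↦
      hAne (((hA.disjoint_derivedSeries_center hss).mono_left hAD).eq_bot_of_le hAZ)
    exact ⟨Or.inr hAZ, iff_of_false hAD fun h ↦ hAne (h.symm.trans hbot)⟩
  · have hAD : A ≤ derivedSeries F L 1 := heq.ge.trans (LieSubmodule.mono_lie_right ⊤ le_top)
    exact ⟨Or.inl hAD, iff_of_true hAD heq⟩
end

section
/- Let L be a finite-dimensional metabelian Lie algebra over a field F (i.e., [[L,L],[L,L]] = 0), and let U be a maximal nilpotent subalgebra of L. Then U ∩ [L, L] is an abelian ideal of L, and there exists an ideal K of L such that [L, L] = (U ∩ [L, L]) + K, (U ∩ [L, L]) ∩ K = 0, and [U, K] = K. -/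
/-!
Let `A` be an abelian ideal with `L / A` abelian (here `A = [L, L]`). For `y ∈ L` and `u ∈ U`
the element `⁅u, y⁆ ∈ A` acts trivially on `A`, so `ad y` commutes on `A` with the action of `U`.
Hence both parts of the Fitting decomposition `A = A₀ ⊕ A₁` of `A` as a `U`-module are ideals
of `L`. As `U` is nilpotent, `U ∩ A ⊆ A₀`. Conversely `U + A₀` is a nilpotent subalgebra, by
Engel's theorem: `ad (u + n)` agrees with `ad u` on the abelian `A₀`, and with `ad u` modulo `A₀`
on `U`. By maximality `A₀ ⊆ U`, so `U ∩ A = A₀`, and `K = A₁` is the complement. Finally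
`⁅U, A₁⁆ = A₁` because `A₁` is the stable term of the lower central series of `A`.
-/

open LieAlgebra LieModule

lemma LieModule.top_lie_posFittingComp (R L M : Type*) [CommRing R] [LieRing L] [LieAlgebra R L]
    [AddCommGroup M] [Module R M] [LieRingModule L M] [LieModule R L M] [LieRing.IsNilpotent L]
    [IsNoetherian R M] [IsArtinian R M] :
    ⁅(⊤ : LieIdeal R L), posFittingComp R L M⁆ = posFittingComp R L M := by
  obtain ⟨l, hl⟩ := Filter.eventually_atTop.mp (eventually_iInf_lowerCentralSeries_eq R L M)
  rw [← iInf_lowerCentralSeries_eq_posFittingComp, hl l le_rfl, ← lowerCentralSeries_succ]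
  exact (hl (l + 1) l.le_succ).symm.trans (hl l le_rfl)

section

variable {F L : Type*} [Field F] [LieRing L] [LieAlgebra F L]

lemma LieAlgebra.ad_add_pow_apply_eq_of_mem {N : Submodule F L} {u n m : L}
    (hu : ∀ x ∈ N, ⁅u, x⁆ ∈ N) (hn : ∀ x ∈ N, ⁅n, x⁆ = 0) (hm : m ∈ N) (k : ℕ) :
    (ad F L (u + n) ^ k) m = (ad F L u ^ k) m := by
  induction k generalizing m with
  | zero => rfl
  | succ k ih =>
    rw [pow_succ, pow_succ, Module.End.mul_apply, Module.End.mul_apply, ad_apply, ad_apply,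
      add_lie, hn m hm, add_zero, ih (hu m hm)]

namespace LieSubalgebra

variable (U : LieSubalgebra F L) (N : Submodule F L)

def supAbelian (hUN : ∀ u ∈ U, ∀ n ∈ N, ⁅u, n⁆ ∈ N) (hN : ∀ n ∈ N, ∀ n' ∈ N, ⁅n, n'⁆ = 0) :
    LieSubalgebra F L where
  toSubmodule := U.toSubmodule ⊔ N
  lie_mem' {x y} hx hy := by
    obtain ⟨u, hu, n, hn, rfl⟩ := Submodule.mem_sup.mp hx
    obtain ⟨u', hu', n', hn', rfl⟩ := Submodule.mem_sup.mp hy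
    have hnu' : ⁅n, u'⁆ ∈ N := by rw [← lie_skew]; exact N.neg_mem (hUN u' hu' n hn)
    rw [add_lie, lie_add, lie_add, hN n hn n' hn', add_zero, add_assoc]
    exact Submodule.add_mem_sup (U.lie_mem hu hu') (N.add_mem (hUN u hu n' hn') hnu')

variable {U N}

lemma ad_pow_apply_mem {u w : L} (hu : u ∈ U) (hw : w ∈ U) (k : ℕ) : (ad F L u ^ k) w ∈ U := by
  rw [← U.coe_ad_pow F L ⟨u, hu⟩ ⟨w, hw⟩]
  exact Subtype.prop _

lemma ad_add_pow_apply_sub_mem (hUN : ∀ u ∈ U, ∀ n ∈ N, ⁅u, n⁆ ∈ N) {u n w : L} (hu : u ∈ U)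
    (hn : n ∈ N) (hnN : ∀ x ∈ N, ⁅n, x⁆ = 0) (hw : w ∈ U) (k : ℕ) :
    (ad F L (u + n) ^ k) w - (ad F L u ^ k) w ∈ N := by
  induction k with
  | zero => simp
  | succ k ih =>
    set x := (ad F L (u + n) ^ k) w
    set y := (ad F L u ^ k) w
    have hxy : ⁅u + n, x - y⁆ ∈ N := by
      rw [add_lie, hnN _ ih, add_zero]; exact hUN u hu _ ih
    have hny : ⁅n, y⁆ ∈ N := by
      rw [← lie_skew]; exact N.neg_mem (hUN y (ad_pow_apply_mem hu hw k) n hn)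
    rw [pow_succ', pow_succ', Module.End.mul_apply, Module.End.mul_apply, ad_apply, ad_apply,
      show ⁅u + n, x⁆ - ⁅u, y⁆ = ⁅u + n, x - y⁆ + ⁅n, y⁆ by rw [lie_sub, add_lie, add_lie]; abel]
    exact N.add_mem hxy hny

lemma isNilpotent_supAbelian [FiniteDimensional F L] [LieRing.IsNilpotent U]
    (hUN : ∀ u ∈ U, ∀ n ∈ N, ⁅u, n⁆ ∈ N) (hN : ∀ n ∈ N, ∀ n' ∈ N, ⁅n, n'⁆ = 0)
    (hnil : ∀ u ∈ U, ∀ n ∈ N, ∃ k, (ad F L u ^ k) n = 0) :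
    LieRing.IsNilpotent (U.supAbelian N hUN hN) := by
  rw [LieAlgebra.isNilpotent_iff_forall (R := F)]
  rintro ⟨-, hv⟩
  obtain ⟨u, hu, n, hn, rfl⟩ := Submodule.mem_sup.mp hv
  set E := (ad F L (u + n)).maxGenEigenspace 0
  have mem_E {w : L} : w ∈ E ↔ ∃ k, (ad F L (u + n) ^ k) w = 0 := by
    simp [E, Module.End.mem_maxGenEigenspace]
  have hNE : N ≤ E := fun m hm ↦ by
    obtain ⟨k, hk⟩ := hnil u hu m hm
    exact mem_E.mpr ⟨k, by rwa [ad_add_pow_apply_eq_of_mem (hUN u hu) (hN n hn) hm]⟩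
  have hUE : U.toSubmodule ≤ E := fun w hw ↦ by
    obtain ⟨a, ha⟩ := nilpotent_ad_of_nilpotent_algebra F U
    have hua : (ad F L u ^ a) w = 0 := by
      rw [← U.coe_ad_pow F L ⟨u, hu⟩ ⟨w, hw⟩, ha]; rfl
    have hwa : (ad F L (u + n) ^ a) w ∈ N := by
      simpa [hua] using ad_add_pow_apply_sub_mem hUN hu hn (hN n hn) hw a
    obtain ⟨b, hb⟩ := mem_E.mp (hNE hwa)
    exact mem_E.mpr ⟨b + a, by rwa [pow_add, Module.End.mul_apply]⟩
  rw [Module.End.isNilpotent_iff_of_finite]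
  rintro ⟨w, hw⟩
  obtain ⟨k, hk⟩ := mem_E.mp (sup_le hUE hNE hw)
  exact ⟨k, Subtype.ext (by rw [coe_ad_pow]; exact hk)⟩

end LieSubalgebra

namespace LieIdeal
variable {U : LieSubalgebra F L} {A : LieIdeal F L}

def ofLieSubmodule (N : LieSubmodule F U A) (hN : ∀ y : L, ∀ m ∈ N, ⁅y, m⁆ ∈ N) :
    LieIdeal F L where
  toSubmodule := (N : Submodule F A).map (LieSubmodule.incl A : A →ₗ[F] L)
  lie_mem := by
    rintro y - ⟨m, hm, rfl⟩
    exact ⟨_, hN y m hm, rfl⟩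

@[simp]
lemma toSubmodule_ofLieSubmodule (N : LieSubmodule F U A) (hN : ∀ y : L, ∀ m ∈ N, ⁅y, m⁆ ∈ N) :
    (ofLieSubmodule N hN).toSubmodule = (N : Submodule F A).map (LieSubmodule.incl A : A →ₗ[F] L) :=
  rfl

variable {N₁ N₂ : LieSubmodule F U A} (h₁ : ∀ y : L, ∀ m ∈ N₁, ⁅y, m⁆ ∈ N₁)
  (h₂ : ∀ y : L, ∀ m ∈ N₂, ⁅y, m⁆ ∈ N₂)

lemma ofLieSubmodule_sup_ofLieSubmodule (h : Codisjoint N₁ N₂) :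
    (ofLieSubmodule N₁ h₁).toSubmodule ⊔ (ofLieSubmodule N₂ h₂).toSubmodule = A.toSubmodule := by
  rw [toSubmodule_ofLieSubmodule, toSubmodule_ofLieSubmodule, ← Submodule.map_sup,
    ← LieSubmodule.sup_toSubmodule, h.eq_top, LieSubmodule.top_toSubmodule, Submodule.map_top,
    LieSubmodule.incl_coe, Submodule.range_subtype]

lemma ofLieSubmodule_inf_ofLieSubmodule (h : Disjoint N₁ N₂) :
    (ofLieSubmodule N₁ h₁).toSubmodule ⊓ (ofLieSubmodule N₂ h₂).toSubmodule = ⊥ := by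
  rw [toSubmodule_ofLieSubmodule, toSubmodule_ofLieSubmodule,
    ← Submodule.map_inf _ (LieSubmodule.injective_incl A), ← LieSubmodule.inf_toSubmodule,
    h.eq_bot, LieSubmodule.bot_toSubmodule, Submodule.map_bot]

lemma span_lie_ofLieSubmodule (hN : ⁅(⊤ : LieIdeal F U), N₁⁆ = N₁) :
    Submodule.span F {x : L | ∃ u ∈ U, ∃ k ∈ ofLieSubmodule N₁ h₁, ⁅u, k⁆ = x} =
      (ofLieSubmodule N₁ h₁).toSubmodule := by
  apply le_antisymm
  · rw [Submodule.span_le]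
    rintro - ⟨u, -, k, hk, rfl⟩
    exact (ofLieSubmodule N₁ h₁).lie_mem hk
  · rintro - ⟨m, hm, rfl⟩
    replace hm : m ∈ (⁅(⊤ : LieIdeal F U), N₁⁆ : LieSubmodule F U A).toSubmodule := by
      rwa [hN]
    rw [LieSubmodule.lieIdeal_oper_eq_linear_span] at hm
    have := Submodule.mem_map_of_mem (f := (LieSubmodule.incl A : A →ₗ[F] L)) hm
    rw [Submodule.map_span] at this
    refine Submodule.span_mono ?_ this
    rintro - ⟨-, ⟨x, n, rfl⟩, rfl⟩
    exact ⟨x.1, x.1.2, n.1, ⟨n.1, n.2, rfl⟩, rfl⟩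

lemma ofLieSubmodule_le (N : LieSubmodule F U A) (hN : ∀ y : L, ∀ m ∈ N, ⁅y, m⁆ ∈ N) :
    ofLieSubmodule N hN ≤ A := by
  rintro - ⟨m, -, rfl⟩
  exact m.2

lemma coe_toEnd_pow_apply (u : U) (m : A) (k : ℕ) :
    ((toEnd F U A u ^ k) m : L) = (ad F L u ^ k) m :=
  LieSubmodule.coe_toEnd_pow F L L A u m k

lemma lie_eq_zero_of_mem [IsLieAbelian A] {x y : L} (hx : x ∈ A) (hy : y ∈ A) : ⁅x, y⁆ = 0 :=
  congrArg Subtype.val (trivial_lie_zero A A ⟨x, hx⟩ ⟨y, hy⟩)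

lemma isLieAbelian_of_le {I J : LieIdeal F L} (h : I ≤ J) [hJ : IsLieAbelian J] :
    IsLieAbelian I := by
  rw [LieSubmodule.lie_abelian_iff_lie_self_eq_bot] at hJ ⊢
  exact eq_bot_iff.mpr (hJ ▸ LieSubmodule.mono_lie h h)

variable (U A)

def adLieModuleHom [IsLieAbelian A] (hLA : ∀ x y : L, ⁅x, y⁆ ∈ A) (y : L) : A →ₗ⁅F, U⁆ A where
  toLinearMap := toEnd F L A y
  map_lie' {u m} := by
    ext
    simp [leibniz_lie (u : L) y (m : L), lie_eq_zero_of_mem (hLA u y) m.2]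

variable [LieRing.IsNilpotent U] [IsLieAbelian A] (hLA : ∀ x y : L, ⁅x, y⁆ ∈ A)

def zeroFittingIdeal : LieIdeal F L :=
  ofLieSubmodule (genWeightSpace A (0 : U → F)) fun y _ hm ↦
    map_genWeightSpace_le (adLieModuleHom U A hLA y) (LieSubmodule.mem_map_of_mem hm)

def posFittingIdeal : LieIdeal F L :=
  ofLieSubmodule (posFittingComp F U A) fun y _ hm ↦
    map_posFittingComp_le (adLieModuleHom U A hLA y) (LieSubmodule.mem_map_of_mem hm)

lemma zeroFittingIdeal_le : zeroFittingIdeal U A hLA ≤ A :=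
  ofLieSubmodule_le _ _

lemma inf_le_zeroFittingIdeal :
    U.toSubmodule ⊓ A.toSubmodule ≤ (zeroFittingIdeal U A hLA).toSubmodule := by
  rintro x ⟨hxU, hxA⟩
  refine ⟨⟨x, hxA⟩, (mem_genWeightSpace _ _ _).mpr fun u ↦ ?_, rfl⟩
  obtain ⟨a, ha⟩ := nilpotent_ad_of_nilpotent_algebra F U
  refine ⟨a, Subtype.ext ?_⟩
  rw [Pi.zero_apply, zero_smul, sub_zero, coe_toEnd_pow_apply, ← U.coe_ad_pow F L u ⟨x, hxU⟩, ha]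
  rfl

variable [FiniteDimensional F L]

lemma zeroFittingIdeal_sup_posFittingIdeal :
    (zeroFittingIdeal U A hLA).toSubmodule ⊔ (posFittingIdeal U A hLA).toSubmodule =
      A.toSubmodule :=
  ofLieSubmodule_sup_ofLieSubmodule _ _
    (isCompl_genWeightSpace_zero_posFittingComp F U A).codisjoint

lemma zeroFittingIdeal_inf_posFittingIdeal :
    (zeroFittingIdeal U A hLA).toSubmodule ⊓ (posFittingIdeal U A hLA).toSubmodule = ⊥ :=
  ofLieSubmodule_inf_ofLieSubmodule _ _ (isCompl_genWeightSpace_zero_posFittingComp F U A).disjoint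

lemma span_lie_posFittingIdeal :
    Submodule.span F {x : L | ∃ u ∈ U, ∃ k ∈ posFittingIdeal U A hLA, ⁅u, k⁆ = x} =
      (posFittingIdeal U A hLA).toSubmodule :=
  span_lie_ofLieSubmodule _ (top_lie_posFittingComp F U A)

lemma zeroFittingIdeal_le_of_isMaximal
    (hU : ∀ V : LieSubalgebra F L, LieRing.IsNilpotent V → U ≤ V → U = V) :
    (zeroFittingIdeal U A hLA).toSubmodule ≤ U.toSubmodule := by
  set N := (zeroFittingIdeal U A hLA).toSubmodule
  have hUN : ∀ u ∈ U, ∀ n ∈ N, ⁅u, n⁆ ∈ N := fun u _ n hn ↦ (zeroFittingIdeal U A hLA).lie_mem hn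
  have hN : ∀ n ∈ N, ∀ n' ∈ N, ⁅n, n'⁆ = 0 := fun n hn n' hn' ↦
    lie_eq_zero_of_mem (zeroFittingIdeal_le U A hLA hn) (zeroFittingIdeal_le U A hLA hn')
  have hnil : ∀ u ∈ U, ∀ n ∈ N, ∃ k, (ad F L u ^ k) n = 0 := by
    rintro u hu - ⟨m, hm, rfl⟩
    obtain ⟨k, hk⟩ := (mem_genWeightSpace _ _ _).mp hm ⟨u, hu⟩
    rw [Pi.zero_apply, zero_smul, sub_zero] at hk
    exact ⟨k, (coe_toEnd_pow_apply ⟨u, hu⟩ m k).symm.trans (congrArg Subtype.val hk)⟩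
  have hV := hU _ (U.isNilpotent_supAbelian hUN hN hnil) fun x hx ↦ Submodule.mem_sup_left hx
  rw [hV]
  exact le_sup_right

lemma toSubmodule_zeroFittingIdeal_of_isMaximal
    (hU : ∀ V : LieSubalgebra F L, LieRing.IsNilpotent V → U ≤ V → U = V) :
    (zeroFittingIdeal U A hLA).toSubmodule = U.toSubmodule ⊓ A.toSubmodule :=
  le_antisymm (le_inf (zeroFittingIdeal_le_of_isMaximal U A hLA hU) (zeroFittingIdeal_le U A hLA))
    (inf_le_zeroFittingIdeal U A hLA)

end LieIdeal

end

open LieIdeal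

theorem metabelian_max_nilpotent_subalgebra (F L : Type*) [Field F] [LieRing L] [LieAlgebra F L]
    [FiniteDimensional F L] (hmeta : LieAlgebra.derivedSeries F L 2 = ⊥)
    (U : LieSubalgebra F L) (hUnil : LieRing.IsNilpotent U)
    (hUmax : ∀ V : LieSubalgebra F L, LieRing.IsNilpotent V → U ≤ V → U = V) :
    (∃ I : LieIdeal F L,
        I.toSubmodule = U.toSubmodule ⊓ (LieAlgebra.derivedSeries F L 1).toSubmodule ∧
        IsLieAbelian I) ∧
    ∃ K : LieIdeal F L,
      (LieAlgebra.derivedSeries F L 1).toSubmodule =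
          (U.toSubmodule ⊓ (LieAlgebra.derivedSeries F L 1).toSubmodule) ⊔ K.toSubmodule ∧
      (U.toSubmodule ⊓ (LieAlgebra.derivedSeries F L 1).toSubmodule) ⊓ K.toSubmodule = ⊥ ∧
      Submodule.span F {x : L | ∃ u ∈ U, ∃ k ∈ K, ⁅u, k⁆ = x} = K.toSubmodule := by
  set D := LieAlgebra.derivedSeries F L 1
  have : IsLieAbelian D := (abelian_iff_derived_succ_eq_bot ⊤ 1).mpr hmeta
  have hLD (x y : L) : ⁅x, y⁆ ∈ D :=
    LieSubmodule.lie_mem_lie (LieSubmodule.mem_top x) (LieSubmodule.mem_top y)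
  have hUD := toSubmodule_zeroFittingIdeal_of_isMaximal U D hLD hUmax
  refine ⟨⟨_, hUD, isLieAbelian_of_le (zeroFittingIdeal_le U D hLD)⟩, posFittingIdeal U D hLD,
    ?_, ?_, span_lie_posFittingIdeal U D hLD⟩
  · rw [← hUD, zeroFittingIdeal_sup_posFittingIdeal]
  · rw [← hUD, zeroFittingIdeal_inf_posFittingIdeal]
end

section
/- Let L be a finite-dimensional monolithic strongly solvable Lie A-algebra over a field F, and let U be a maximal nilpotent subalgebra of L. Then either U = [L, L] (as subsets of L) or U is a Cartan subalgebra of L. -/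
/-!
Suppose `U` is not self-normalizing and pick `x ∈ N(U) \ U`; both `U` and `D = L²` are abelian.
Since `[L, L] ⊆ D` acts trivially on `D`, each `ad y|_D` commutes with the action of `L`, so its
Fitting components are ideals of `L`; they meet trivially while every nonzero ideal contains the
monolith, hence `ad y|_D` is nilpotent or injective. As `ad x` is not nilpotent on `U` (else
`U + F x` would be nilpotent), `ad x|_D` is injective and some `[x, u₀] ∈ U ∩ D` is nonzero.
Every `u ∈ U` kills it, so acts nilpotently on `D`, which makes `U + D` nilpotent and `D ≤ U`.
Finally `ad x|_D` is bijective: for `u ∈ U` pick `a ∈ D` with `[x, a] = [x, u]`; then `u - a` is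
central, and the centre is trivial because `x` does not kill the monolith `W ≤ D`.
-/

open LieAlgebra
open LieModule (toEnd)

theorem Module.End.eqOn_pow_of_eqOn {R V : Type*} [Semiring R] [AddCommMonoid V] [Module R V]
    {f g : Module.End R V} {s : Set V} (hg : Set.MapsTo g s s) (hfg : Set.EqOn f g s) :
    ∀ k : ℕ, Set.EqOn ⇑(f ^ k) ⇑(g ^ k) s
  | 0 => fun _ _ => rfl
  | k + 1 => fun v hv => by
    simp only [pow_succ, Module.End.mul_apply, hfg hv, eqOn_pow_of_eqOn hg hfg k (hg hv)]

section LieModule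

variable {R L M : Type*} [CommRing R] [LieRing L] [AddCommGroup M] [Module R M]
  [LieRingModule L M]

theorem LieSubmodule.inf_ne_bot_of_forall_le {W : LieSubmodule R L M} (hW : W ≠ ⊥)
    (hWmin : ∀ N : LieSubmodule R L M, N ≠ ⊥ → W ≤ N) (D : LieSubmodule R L M)
    (N₁ N₂ : LieSubmodule R L D) (h₁ : N₁ ≠ ⊥) (h₂ : N₂ ≠ ⊥) : N₁ ⊓ N₂ ≠ ⊥ := by
  have hinj := D.injective_incl
  have hmap {N : LieSubmodule R L D} (hN : N ≠ ⊥) : N.map D.incl ≠ ⊥ := by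
    rwa [Ne, ← LieSubmodule.map_bot (f := D.incl),
      (LieSubmodule.map_injective_of_injective hinj).eq_iff]
  intro h
  refine hW (le_bot_iff.mp ?_)
  calc W ≤ N₁.map D.incl ⊓ N₂.map D.incl := le_inf (hWmin _ (hmap h₁)) (hWmin _ (hmap h₂))
    _ = ⊥ := by rw [← LieSubmodule.map_inf hinj, h, LieSubmodule.map_bot]

variable [LieAlgebra R L] [LieModule R L M]

def LieModuleHom.ofCommute (f : Module.End R M) (hf : ∀ y : L, Commute (toEnd R L M y) f) :
    M →ₗ⁅R,L⁆ M :=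
  { f with map_lie' := fun {y m} => (LinearMap.congr_fun (hf y) m).symm }

theorem Module.End.isNilpotent_or_injective_of_commute_toEnd [IsNoetherian R M]
    (huniform : ∀ N₁ N₂ : LieSubmodule R L M, N₁ ≠ ⊥ → N₂ ≠ ⊥ → N₁ ⊓ N₂ ≠ ⊥)
    (f : Module.End R M) (hf : ∀ y : L, Commute (toEnd R L M y) f) :
    IsNilpotent f ∨ Function.Injective f := by
  obtain ⟨n, hn⟩ := Filter.eventually_atTop.mp f.eventually_disjoint_ker_pow_range_pow
  set g := LieModuleHom.ofCommute (f ^ (n + 1)) fun y => (hf y).pow_right (n + 1)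
  have hinf : g.ker ⊓ g.range = ⊥ := by
    rw [← LieSubmodule.toSubmodule_inj, LieSubmodule.inf_toSubmodule]
    exact disjoint_iff.mp (hn _ n.le_succ)
  rcases eq_or_ne g.range ⊥ with hrange | hrange
  · refine .inl ⟨n + 1, LinearMap.ext fun m => ?_⟩
    have hm : g m ∈ g.range := (g.mem_range _).mpr ⟨m, rfl⟩
    rwa [hrange, LieSubmodule.mem_bot] at hm
  · have hker : g.ker = ⊥ := by_contra fun hker => huniform _ _ hker hrange hinf
    have hinj : Function.Injective (f ^ n * f) := by
      rw [← pow_succ]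
      exact (LieModuleHom.ker_eq_bot g).mp hker
    exact .inr (Function.Injective.of_comp hinj)

end LieModule

section LieAlgebra

variable {F L : Type*} [Field F] [LieRing L] [LieAlgebra F L]

theorem IsAAlgebra.lie_eq_zero_s16 (hA : IsAAlgebra F L) {U : LieSubalgebra F L}
    (hU : LieRing.IsNilpotent U) : ∀ a ∈ U, ∀ b ∈ U, ⁅a, b⁆ = 0 :=
  fun a ha b hb => congrArg Subtype.val ((hA U hU).trivial ⟨a, ha⟩ ⟨b, hb⟩)

namespace LieIdeal

variable {D : LieIdeal F L}

theorem ad_pow_apply_eq_zero {y : L} {k : ℕ} (hk : toEnd F L D y ^ k = 0) {v : L}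
    (hv : v ∈ D) : (ad F L y ^ k) v = 0 := by
  have h := LieSubmodule.coe_toEnd_pow F L L D y ⟨v, hv⟩ k
  rw [hk] at h
  exact h.symm

theorem eq_zero_of_injective_toEnd {x : L} (hx : Function.Injective (toEnd F L D x)) {v : L}
    (hv : v ∈ D) (hxv : ⁅x, v⁆ = 0) : v = 0 :=
  congrArg Subtype.val ((injective_iff_map_eq_zero _).mp hx ⟨v, hv⟩ (Subtype.ext hxv))

theorem isNilpotent_ad_of_isNilpotent_toEnd (hbr : ∀ a b : L, ⁅a, b⁆ ∈ D) {x : L}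
    (hx : IsNilpotent (toEnd F L D x)) : IsNilpotent (ad F L x) := by
  obtain ⟨k, hk⟩ := hx
  refine ⟨k + 1, LinearMap.ext fun z => ?_⟩
  rw [pow_succ, Module.End.mul_apply]
  exact ad_pow_apply_eq_zero hk (hbr x z)

theorem commute_toEnd (hbr : ∀ a b : L, ⁅a, b⁆ ∈ D) (hD : ∀ a ∈ D, ∀ b ∈ D, ⁅a, b⁆ = 0)
    (y z : L) : Commute (toEnd F L D y) (toEnd F L D z) := by
  refine LinearMap.ext fun v => Subtype.ext ?_
  show ⁅y, ⁅z, (v : L)⁆⁆ = ⁅z, ⁅y, (v : L)⁆⁆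
  rw [leibniz_lie, hD _ (hbr y z) _ v.2, zero_add]

theorem isNilpotent_or_injective_toEnd [FiniteDimensional F L] {W : LieIdeal F L} (hW : W ≠ ⊥)
    (hWmin : ∀ I : LieIdeal F L, I ≠ ⊥ → W ≤ I) (hbr : ∀ a b : L, ⁅a, b⁆ ∈ D)
    (hD : ∀ a ∈ D, ∀ b ∈ D, ⁅a, b⁆ = 0) (y : L) :
    IsNilpotent (toEnd F L D y) ∨ Function.Injective (toEnd F L D y) :=
  (toEnd F L D y).isNilpotent_or_injective_of_commute_toEnd
    (LieSubmodule.inf_ne_bot_of_forall_le hW hWmin D) (commute_toEnd hbr hD · y)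

end LieIdeal

theorem LieAlgebra.center_eq_bot_of_injective_toEnd {W : LieIdeal F L} (hW : W ≠ ⊥)
    (hWmin : ∀ I : LieIdeal F L, I ≠ ⊥ → W ≤ I) {D : LieIdeal F L} (hD : D ≠ ⊥) {x : L}
    (hx : Function.Injective (toEnd F L D x)) : center F L = ⊥ := by
  by_contra hZ
  obtain ⟨w, hwW, hw⟩ : ∃ w ∈ W, w ≠ 0 := by
    by_contra! h
    exact hW ((LieSubmodule.eq_bot_iff W).mpr h)
  exact hw (LieIdeal.eq_zero_of_injective_toEnd hx (hWmin D hD hwW)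
    ((LieModule.mem_maxTrivSubmodule F L L w).mp (hWmin _ hZ hwW) x))

namespace LieSubalgebra

variable {U : LieSubalgebra F L}

theorem isNilpotent_of_ad_pow_eqOn_zero [FiniteDimensional F L] (S : LieSubalgebra F L)
    (I : Set L) (hI : ∀ a ∈ S, ∀ b ∈ S, ⁅a, b⁆ ∈ I)
    (hnil : ∀ s ∈ S, ∃ k : ℕ, Set.EqOn ⇑(ad F L s ^ k) 0 I) : LieRing.IsNilpotent S := by
  rw [LieAlgebra.isNilpotent_iff_forall (R := F)]
  intro s
  obtain ⟨k, hk⟩ := hnil s s.2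
  refine ⟨k + 1, LinearMap.ext fun t => Subtype.ext ?_⟩
  rw [coe_ad_pow, pow_succ, Module.End.mul_apply]
  exact hk (hI s s.2 t t.2)

theorem lie_mem_of_mem_normalizer_of_mem_sup {x y z : L} (hx : x ∈ U.normalizer)
    (hy : y ∈ (F ∙ x) ⊔ U.toSubmodule) (hz : z ∈ (F ∙ x) ⊔ U.toSubmodule) : ⁅y, z⁆ ∈ U := by
  obtain ⟨_, hα, u, hu, rfl⟩ := Submodule.mem_sup.mp hy
  obtain ⟨_, hβ, v, hv, rfl⟩ := Submodule.mem_sup.mp hz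
  obtain ⟨α, rfl⟩ := Submodule.mem_span_singleton.mp hα
  obtain ⟨β, rfl⟩ := Submodule.mem_span_singleton.mp hβ
  have hxv : ⁅x, v⁆ ∈ U := ideal_in_normalizer hx hv
  have hux : ⁅u, x⁆ ∈ U := by rw [← lie_skew]; exact U.neg_mem (ideal_in_normalizer hx hu)
  simp only [add_lie, lie_add, smul_lie, lie_smul, lie_self, smul_zero, zero_add]
  exact U.add_mem (U.smul_mem β hux) (U.add_mem (U.smul_mem α hxv) (U.lie_mem hu hv))

variable [FiniteDimensional F L]

theorem exists_ad_pow_apply_ne_zero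
    (hUmax : ∀ V : LieSubalgebra F L, LieRing.IsNilpotent V → U ≤ V → U = V)
    (hU : ∀ a ∈ U, ∀ b ∈ U, ⁅a, b⁆ = 0) {x : L}
    (hxN : x ∈ U.normalizer) (hxU : x ∉ U) (k : ℕ) : ∃ u ∈ U, (ad F L x ^ k) u ≠ 0 := by
  by_contra! hk
  let M : LieSubalgebra F L :=
    { (F ∙ x) ⊔ U.toSubmodule with lie_mem' := lie_mem_sup_of_mem_normalizer hxN }
  have hMnil : LieRing.IsNilpotent M := by
    refine M.isNilpotent_of_ad_pow_eqOn_zero U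
      (fun a ha b hb => lie_mem_of_mem_normalizer_of_mem_sup hxN ha hb) fun s hs => ⟨k, ?_⟩
    obtain ⟨_, hα, u, hu, rfl⟩ := Submodule.mem_sup.mp hs
    obtain ⟨α, rfl⟩ := Submodule.mem_span_singleton.mp hα
    have hmaps : Set.MapsTo (α • ad F L x) U U := fun v hv =>
      U.smul_mem α (ideal_in_normalizer hxN hv)
    have hagree : Set.EqOn (ad F L (α • x + u)) (α • ad F L x) U := fun v hv => by
      simp [hU u hu v hv]
    intro v hv
    rw [Module.End.eqOn_pow_of_eqOn hmaps hagree k hv, smul_pow, LinearMap.smul_apply, hk v hv,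
      smul_zero, Pi.zero_apply]
  have hUM : U = M := hUmax M hMnil fun u hu => Submodule.mem_sup_right hu
  exact hxU (hUM ▸ Submodule.mem_sup_left (Submodule.mem_span_singleton_self x))

theorem le_of_isNilpotent_toEnd
    (hUmax : ∀ V : LieSubalgebra F L, LieRing.IsNilpotent V → U ≤ V → U = V)
    {D : LieIdeal F L} (hbr : ∀ a b : L, ⁅a, b⁆ ∈ D)
    (hD : ∀ a ∈ D, ∀ b ∈ D, ⁅a, b⁆ = 0) (hUD : ∀ u ∈ U, IsNilpotent (toEnd F L D u)) :
    LieSubmodule.toSubmodule D ≤ U.toSubmodule := by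
  let S : LieSubalgebra F L :=
    { U.toSubmodule ⊔ LieSubmodule.toSubmodule D with
      lie_mem' := fun _ _ => Submodule.mem_sup_right (hbr _ _) }
  have hSnil : LieRing.IsNilpotent S := by
    refine S.isNilpotent_of_ad_pow_eqOn_zero D (fun a _ b _ => hbr a b) fun s hs => ?_
    obtain ⟨u, hu, a, ha, rfl⟩ := Submodule.mem_sup.mp hs
    obtain ⟨k, hk⟩ := hUD u hu
    have hmaps : Set.MapsTo (ad F L u) D D := fun v hv => D.lie_mem hv
    have hagree : Set.EqOn (ad F L (u + a)) (ad F L u) D := fun v hv => by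
      simp [hD a ha v hv]
    exact ⟨k, fun v hv => (Module.End.eqOn_pow_of_eqOn hmaps hagree k hv).trans
      (LieIdeal.ad_pow_apply_eq_zero hk hv)⟩
  rw [hUmax S hSnil fun u hu => Submodule.mem_sup_left hu]
  exact le_sup_right

theorem le_of_injective_toEnd {D : LieIdeal F L} (hbr : ∀ a b : L, ⁅a, b⁆ ∈ D)
    (hU : ∀ a ∈ U, ∀ b ∈ U, ⁅a, b⁆ = 0) (hDU : LieSubmodule.toSubmodule D ≤ U.toSubmodule)
    (hZ : center F L = ⊥) {x : L} (hx : Function.Injective (toEnd F L D x)) :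
    U.toSubmodule ≤ LieSubmodule.toSubmodule D := by
  intro u hu
  obtain ⟨a, ha⟩ := LinearMap.injective_iff_surjective.mp hx ⟨⁅x, u⁆, hbr x u⟩
  have hxa : ⁅x, (a : L)⁆ = ⁅x, u⁆ := congrArg Subtype.val ha
  have hua : u - a ∈ U := U.sub_mem hu (hDU a.2)
  have hcentral : u - a ∈ center F L := by
    refine (LieModule.mem_maxTrivSubmodule F L L _).mpr fun z => ?_
    rw [← lie_skew, neg_eq_zero]
    refine LieIdeal.eq_zero_of_injective_toEnd hx (hbr _ _) ?_
    rw [leibniz_lie, lie_sub, hxa, sub_self, zero_lie, zero_add]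
    exact hU _ hua _ (hDU (hbr x z))
  rw [hZ, LieSubmodule.mem_bot, sub_eq_zero] at hcentral
  exact hcentral ▸ a.2

end LieSubalgebra

end LieAlgebra

theorem monolithic_max_nilpotent (F L : Type*) [Field F] [LieRing L] [LieAlgebra F L]
    [FiniteDimensional F L] (hA : IsAAlgebra F L)
    (hss : LieRing.IsNilpotent (LieAlgebra.derivedSeries F L 1))
    (W : LieIdeal F L) (hWne : W ≠ ⊥)
    (hWmono : ∀ I : LieIdeal F L, I ≠ ⊥ → W ≤ I)
    (U : LieSubalgebra F L) (hUnil : LieRing.IsNilpotent U)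
    (hUmax : ∀ V : LieSubalgebra F L, LieRing.IsNilpotent V → U ≤ V → U = V) :
    U.toSubmodule = (LieAlgebra.derivedSeries F L 1).toSubmodule ∨
      U.IsCartanSubalgebra := by
  by_cases hself : U.normalizer = U
  · exact .inr ⟨hUnil, hself⟩
  obtain ⟨x, hxN, hxU⟩ :=
    SetLike.not_le_iff_exists.mp fun h => hself (le_antisymm h U.le_normalizer)
  set D := derivedSeries F L 1
  have hbr : ∀ a b : L, ⁅a, b⁆ ∈ D := fun a b =>
    LieSubmodule.lie_mem_lie (LieSubmodule.mem_top a) (LieSubmodule.mem_top b)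
  have hU := hA.lie_eq_zero_s16 hUnil
  have hD := hA.lie_eq_zero_s16 (U := D.toLieSubalgebra) hss
  have hdich := LieIdeal.isNilpotent_or_injective_toEnd hWne hWmono hbr hD
  have hx : Function.Injective (toEnd F L D x) := (hdich x).resolve_left fun h => by
    obtain ⟨k, hk⟩ := LieIdeal.isNilpotent_ad_of_isNilpotent_toEnd hbr h
    obtain ⟨u, -, hu⟩ := U.exists_ad_pow_apply_ne_zero hUmax hU hxN hxU k
    exact hu (by rw [hk]; rfl)
  obtain ⟨u₀, hu₀, hxu₀⟩ := U.exists_ad_pow_apply_ne_zero hUmax hU hxN hxU 1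
  rw [pow_one, ad_apply] at hxu₀
  have hUD : ∀ u ∈ U, IsNilpotent (toEnd F L D u) := fun u hu =>
    (hdich u).resolve_right fun hu' => hxu₀ <| LieIdeal.eq_zero_of_injective_toEnd hu'
      (hbr x u₀) (hU u hu _ (LieSubalgebra.ideal_in_normalizer hxN hu₀))
  have hDne : D ≠ ⊥ := fun h => hxu₀ ((LieSubmodule.eq_bot_iff D).mp h _ (hbr x u₀))
  have hDU := U.le_of_isNilpotent_toEnd hUmax hbr hD hUD
  have hZ := center_eq_bot_of_injective_toEnd hWne hWmono hDne hx
  exact .inl (le_antisymm (U.le_of_injective_toEnd hbr hU hDU hZ hx) hDU)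
end

section
/- Let L be a finite-dimensional metabelian Lie algebra over a field F, and suppose there is a subalgebra B of L with [L, L] ∩ B = 0 and [L, L] + B = L such that [[L, L], b] = [L, L] for every nonzero b ∈ B (where [[L,L], b] denotes the image of [L,L] under ad b). Then L is a strongly solvable Lie A-algebra. -/
/-!
Write `D = [L, L]`; it is abelian, so in particular nilpotent. Let `U` be a nilpotent subalgebra.
If `U ≤ D`, then `U` is abelian. Otherwise pick `u = a + b ∈ U \ D` with `a ∈ D` and `0 ≠ b ∈ B`.
As `D` is abelian, `ad u` and `ad b` agree on `D`, so `ad u` maps `D` onto itself and, `D` being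
finite-dimensional, no power of `ad u` kills a nonzero element of `D`. But `ad u` is nilpotent on
`U`, hence `U ∩ D = 0`, and `[U, U] ≤ U ∩ D` forces `U` to be abelian.
-/

open LieAlgebra

lemma Submodule.map_pow_eq_self {R M : Type*} [Semiring R] [AddCommMonoid M] [Module R M]
    {f : Module.End R M} {D : Submodule R M} (h : D.map f = D) (n : ℕ) : D.map (f ^ n) = D := by
  induction n with
  | zero => rw [pow_zero, Module.End.one_eq_id, Submodule.map_id]
  | succ n ih => rw [pow_succ, Module.End.mul_eq_comp, Submodule.map_comp, h, ih]

lemma Submodule.disjoint_ker_pow_of_map_eq_self {K V : Type*} [Field K] [AddCommGroup V]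
    [Module K V] [FiniteDimensional K V] {f : Module.End K V} {D : Submodule K V}
    (h : D.map f = D) (n : ℕ) : Disjoint D (LinearMap.ker (f ^ n)) :=
  D.disjoint_ker_of_finrank_le _ (by rw [Submodule.map_pow_eq_self h n])

section LieAlgebra

variable {R L : Type*} [CommRing R] [LieRing L] [LieAlgebra R L]

lemma LieIdeal.lie_eq_zero_of_isLieAbelian {I : LieIdeal R L} [IsLieAbelian I] {x y : L}
    (hx : x ∈ I) (hy : y ∈ I) : ⁅x, y⁆ = 0 :=
  congrArg Subtype.val (LieModule.IsTrivial.trivial (⟨x, hx⟩ : I) (⟨y, hy⟩ : I))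

lemma LieIdeal.map_ad_add_left_of_mem {I : LieIdeal R L} [IsLieAbelian I] {a : L} (ha : a ∈ I)
    (b : L) : I.toSubmodule.map (ad R L (a + b)) = I.toSubmodule.map (ad R L b) := by
  refine SetLike.coe_injective ?_
  simp only [Submodule.map_coe]
  refine Set.image_congr fun z hz ↦ ?_
  simp [LieIdeal.lie_eq_zero_of_isLieAbelian ha hz]

end LieAlgebra

lemma LieSubalgebra.disjoint_of_map_ad_eq_self {F L : Type*} [Field F] [LieRing L]
    [LieAlgebra F L] [FiniteDimensional F L] (U : LieSubalgebra F L)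
    [LieRing.IsNilpotent U] {u : L} (hu : u ∈ U) {D : Submodule F L}
    (hD : D.map (ad F L u) = D) : Disjoint U.toSubmodule D := by
  obtain ⟨n, hn⟩ := LieModule.isNilpotent_toEnd_of_isNilpotent F U U ⟨u, hu⟩
  have hU : U.toSubmodule ≤ LinearMap.ker (ad F L u ^ n) := fun z hz ↦ by
    rw [LinearMap.mem_ker, ← LieSubalgebra.coe_ad_pow F L U ⟨u, hu⟩ ⟨z, hz⟩ n, ad, hn]
    rfl
  exact ((Submodule.disjoint_ker_pow_of_map_eq_self hD n).mono_right hU).symm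

theorem metabelian_fixed_point_free_is_A_general (F L : Type*) [Field F] [LieRing L] [LieAlgebra F L]
    [FiniteDimensional F L] (hmeta : LieAlgebra.derivedSeries F L 2 = ⊥)
    (B : LieSubalgebra F L)
    (hsup : (LieAlgebra.derivedSeries F L 1).toSubmodule ⊔ B.toSubmodule = ⊤)
    (hact : ∀ b ∈ B, b ≠ 0 →
      Submodule.map (LieAlgebra.ad F L b) (LieAlgebra.derivedSeries F L 1).toSubmodule =
        (LieAlgebra.derivedSeries F L 1).toSubmodule) :
    LieRing.IsNilpotent (LieAlgebra.derivedSeries F L 1) ∧ IsAAlgebra F L := by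
  set D := derivedSeries F L 1
  have : IsLieAbelian D := (abelian_iff_derived_succ_eq_bot ⊤ 1).mpr hmeta
  refine ⟨inferInstance, fun U _ ↦ ⟨fun x y ↦ Subtype.ext ?_⟩⟩
  have hxyD : ⁅(x : L), (y : L)⁆ ∈ D :=
    LieSubmodule.lie_mem_lie (LieSubmodule.mem_top _) (LieSubmodule.mem_top _)
  by_cases hUD : U.toSubmodule ≤ D.toSubmodule
  · exact LieIdeal.lie_eq_zero_of_isLieAbelian (hUD x.2) (hUD y.2)
  obtain ⟨u, huU, huD⟩ := SetLike.not_le_iff_exists.mp hUD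
  obtain ⟨a, ha, b, hb, rfl⟩ := Submodule.mem_sup.mp (hsup ▸ Submodule.mem_top : u ∈ _)
  have hb0 : b ≠ 0 := by rintro rfl; exact huD (by simpa using ha)
  have hdisj := U.disjoint_of_map_ad_eq_self huU
    ((LieIdeal.map_ad_add_left_of_mem ha b).trans (hact b hb hb0))
  exact Submodule.disjoint_def.mp hdisj _ (U.lie_mem x.2 y.2) hxyD

theorem metabelian_fixed_point_free_is_A (F L : Type*) [Field F] [LieRing L] [LieAlgebra F L]
    [FiniteDimensional F L] (hmeta : LieAlgebra.derivedSeries F L 2 = ⊥)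
    (B : LieSubalgebra F L)
    (hinf : (LieAlgebra.derivedSeries F L 1).toSubmodule ⊓ B.toSubmodule = ⊥)
    (hsup : (LieAlgebra.derivedSeries F L 1).toSubmodule ⊔ B.toSubmodule = ⊤)
    (hact : ∀ b ∈ B, b ≠ 0 →
      Submodule.map (LieAlgebra.ad F L b) (LieAlgebra.derivedSeries F L 1).toSubmodule =
        (LieAlgebra.derivedSeries F L 1).toSubmodule) :
    LieRing.IsNilpotent (LieAlgebra.derivedSeries F L 1) ∧ IsAAlgebra F L :=
  metabelian_fixed_point_free_is_A_general F L hmeta B hsup hact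
end
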